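/- arXiv:1110.6628 — 4 statements merged into one kernel-verified Lean document; each statement's English description precedes it below -/
import Mathlib

section
/- Let G = G₁ *_F G₂ be a virtually cyclic group of Type II (i.e., [Gᵢ : F] = 2 for i = 1, 2 with F finite), and let φ : G₁ *_F G₂ → H be a group homomorphism whose restriction to each Gᵢ is injective. Then φ is injective if and only if the image φ(G) is infinite. -/
/-!
The image `F'` of `F` has index 2 in both factors, hence is normal in `G₁ *_F G₂`, and the quotient
is generated by two involutions `a, b`, the images of elements `xᵢ ∈ Gᵢ \ F`. Every element of such
a group is `(ab)ᵏ` or `a(ab)ᵏ`, and a reflection `a(ab)ᵏ` times its conjugate by `ab` is `(ab)⁻²`;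
so a nontrivial normal subgroup contains a nonzero power of `ab`, and then has finite index.
Thus if `ker ψ ⊄ F'`, then `ker ψ ⊔ F'` has finite index, hence so does `ker ψ` as `F'` is finite,
and `ψ(G)` is finite. If `ker ψ ≤ F' ≤ G₁`, then `ker ψ = 1` as `ψ` is injective on `G₁`.
Conversely `G₁ *_F G₂` is infinite: sending `Gᵢ \ F` to two distinct reflections of the infinite
dihedral group maps `x₁x₂` to an element of infinite order.
-/

namespace InvolutionPair

variable {Q : Type*} [Group Q] {a b : Q}

theorem mul_zpow_mul_self (ha : a * a = 1) (hb : b * b = 1) (k : ℤ) :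
    a * (a * b) ^ k * a = (a * b) ^ (-k) := by
  have ha' : a⁻¹ = a := inv_eq_of_mul_eq_one_left ha
  have hconj : a * (a * b) * a⁻¹ = (a * b)⁻¹ := by
    rw [mul_inv_rev, inv_eq_of_mul_eq_one_left hb, ha', ← mul_assoc, ha, one_mul]
  calc a * (a * b) ^ k * a = a * (a * b) ^ k * a⁻¹ := by rw [ha']
    _ = (a * b) ^ (-k) := by rw [← conj_zpow, hconj, inv_zpow, zpow_neg]

theorem zpow_mul_self (ha : a * a = 1) (hb : b * b = 1) (k : ℤ) :
    (a * b) ^ k * a = a * (a * b) ^ (-k) := by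
  rw [← mul_zpow_mul_self ha hb, ← mul_assoc, ← mul_assoc, ha, one_mul]

theorem exists_eq_zpow_or_eq_mul_zpow (ha : a * a = 1) (hb : b * b = 1)
    (hgen : Subgroup.closure {a, b} = ⊤) (q : Q) :
    ∃ k : ℤ, q = (a * b) ^ k ∨ q = a * (a * b) ^ k := by
  set P : Q → Prop := fun q => ∃ k : ℤ, q = (a * b) ^ k ∨ q = a * (a * b) ^ k
  have hmul_a : ∀ q, P q → P (q * a) := by
    rintro q ⟨k, rfl | rfl⟩
    exacts [⟨-k, .inr (zpow_mul_self ha hb k)⟩, ⟨-k, .inl (mul_zpow_mul_self ha hb k)⟩]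
  have hmul_ab : ∀ q, P q → P (q * (a * b)) := by
    rintro q ⟨k, rfl | rfl⟩
    exacts [⟨k + 1, .inl (zpow_add_one _ k).symm⟩,
      ⟨k + 1, .inr (by rw [mul_assoc, zpow_add_one])⟩]
  have hmul_b : ∀ q, P q → P (q * b) := fun q hq => by
    rw [show b = a * (a * b) by rw [← mul_assoc, ha, one_mul], ← mul_assoc]
    exact hmul_ab _ (hmul_a q hq)
  induction (hgen ▸ Subgroup.mem_top q : q ∈ Subgroup.closure {a, b}) using
    Subgroup.closure_induction_right with
  | one => exact ⟨0, .inl (zpow_zero _).symm⟩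
  | mul_right q _ y hy ih =>
    rcases hy with rfl | rfl
    exacts [hmul_a q ih, hmul_b q ih]
  | mul_inv_cancel q _ y hy ih =>
    rcases hy with rfl | rfl
    · rw [inv_eq_of_mul_eq_one_left ha]; exact hmul_a q ih
    · rw [inv_eq_of_mul_eq_one_left hb]; exact hmul_b q ih

theorem finite_of_isOfFinOrder (ha : a * a = 1) (hb : b * b = 1)
    (hgen : Subgroup.closure {a, b} = ⊤) (hab : IsOfFinOrder (a * b)) : Finite Q := by
  have hZ := hab.finite_zpowers
  refine Set.finite_univ_iff.mp ((hZ.union (hZ.image (a * ·))).subset fun q _ => ?_)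
  obtain ⟨k, rfl | rfl⟩ := exists_eq_zpow_or_eq_mul_zpow ha hb hgen q
  · exact .inl ⟨k, rfl⟩
  · exact .inr ⟨_, ⟨k, rfl⟩, rfl⟩

theorem exists_zpow_mem_of_ne_bot (ha : a * a = 1) (hb : b * b = 1)
    (hgen : Subgroup.closure {a, b} = ⊤) {N : Subgroup Q} [hN : N.Normal] (hN_ne : N ≠ ⊥) :
    ∃ k : ℤ, k ≠ 0 ∧ (a * b) ^ k ∈ N := by
  obtain ⟨⟨q, hqN⟩, hq1⟩ := Subgroup.ne_bot_iff_exists_ne_one.mp hN_ne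
  obtain ⟨k, rfl | rfl⟩ := exists_eq_zpow_or_eq_mul_zpow ha hb hgen q
  · refine ⟨k, ?_, hqN⟩
    rintro rfl
    exact hq1 (Subtype.ext (zpow_zero _))
  · refine ⟨-2, by norm_num, ?_⟩
    convert mul_mem hqN (hN.conj_mem _ hqN (a * b)) using 1
    calc (a * b) ^ (-2 : ℤ) = (a * b) ^ (-(k + 1)) * (a * b) ^ (k - 1) := by
          rw [← zpow_add]; ring_nf
      _ = a * (a * b) ^ (k + 1) * a * (a * b) ^ (k - 1) := by rw [mul_zpow_mul_self ha hb]
      _ = a * (a * b) ^ k * ((a * b) * (a * (a * b) ^ k) * (a * b)⁻¹) := by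
          rw [zpow_add_one, zpow_sub_one]; group

theorem finite_quotient_of_ne_bot (ha : a * a = 1) (hb : b * b = 1)
    (hgen : Subgroup.closure {a, b} = ⊤) (N : Subgroup Q) [N.Normal] (hN : N ≠ ⊥) :
    Finite (Q ⧸ N) := by
  obtain ⟨k, hk, hkN⟩ := exists_zpow_mem_of_ne_bot ha hb hgen hN
  have hπ := QuotientGroup.mk'_surjective N
  apply finite_of_isOfFinOrder (a := QuotientGroup.mk' N a) (b := QuotientGroup.mk' N b)
  · rw [← map_mul, ha, map_one]
  · rw [← map_mul, hb, map_one]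
  · rw [← Set.image_pair, ← MonoidHom.map_closure, hgen, Subgroup.map_top_of_surjective _ hπ]
  · refine isOfFinOrder_iff_zpow_eq_one.mpr ⟨k, hk, ?_⟩
    rw [← map_mul, ← map_zpow, QuotientGroup.mk'_apply, QuotientGroup.eq_one_iff]
    exact hkN

end InvolutionPair

open scoped Classical in
noncomputable def Subgroup.indexTwoHom {G M : Type*} [Group G] [Group M] (N : Subgroup G)
    (hN : N.index = 2) (t : M) (ht : t * t = 1) : G →* M where
  toFun g := if g ∈ N then 1 else t
  map_one' := if_pos N.one_mem
  map_mul' g h := by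
    by_cases hg : g ∈ N <;> by_cases hh : h ∈ N <;>
      simp [hg, hh, Subgroup.mul_mem_iff_of_index_two hN, ht]

theorem Subgroup.indexTwoHom_apply_of_notMem {G M : Type*} [Group G] [Group M] {N : Subgroup G}
    (hN : N.index = 2) {t : M} (ht : t * t = 1) {g : G} (hg : g ∉ N) :
    N.indexTwoHom hN t ht g = t := if_neg hg

theorem Subgroup.indexTwoHom_apply_of_mem {G M : Type*} [Group G] [Group M] {N : Subgroup G}
    (hN : N.index = 2) {t : M} (ht : t * t = 1) {g : G} (hg : g ∈ N) :
    N.indexTwoHom hN t ht g = 1 := if_pos hg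

theorem Subgroup.exists_notMem_of_index_eq_two {G : Type*} [Group G] {N : Subgroup G}
    (hN : N.index = 2) : ∃ g, g ∉ N :=
  SetLike.exists_not_mem_of_ne_top N fun h => by simp [h] at hN

theorem Subgroup.index_ne_zero_of_index_sup_ne_zero {G : Type*} [Group G] {K L : Subgroup G}
    [K.Normal] [Finite L] (h : (K ⊔ L).index ≠ 0) : K.index ≠ 0 := by
  rw [← relIndex_mul_index (le_sup_left : K ≤ K ⊔ L), relIndex_sup_left]
  exact mul_ne_zero FiniteIndex.index_ne_zero h

namespace Monoid.PushoutI

variable {F : Type*} [Group F]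

section

variable {ι : Type*} {G : ι → Type*} [∀ i, Group (G i)] {φ : ∀ i, F →* G i}

theorem of_mem_range_base {i : ι} {g : G i} (hg : g ∈ (φ i).range) :
    of i g ∈ (base φ).range := by
  obtain ⟨f, rfl⟩ := hg
  exact ⟨f, (of_apply_eq_base φ i f).symm⟩

theorem normal_range_base (hφ : ∀ i, ((φ i).range).Normal) : (base φ).range.Normal := by
  suffices h : ∀ g : PushoutI φ, ∀ s ∈ (base φ).range, g * s * g⁻¹ ∈ (base φ).range from
    ⟨fun s hs g => h g s hs⟩
  intro g
  induction g using induction_on with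
  | of i g =>
    rintro _ ⟨f, rfl⟩
    rw [← of_apply_eq_base φ i, ← map_inv, ← map_mul, ← map_mul]
    exact of_mem_range_base ((hφ i).conj_mem _ ⟨f, rfl⟩ g)
  | base f =>
    intro s hs
    exact mul_mem (mul_mem ⟨f, rfl⟩ hs) (inv_mem ⟨f, rfl⟩)
  | mul u v hu hv =>
    intro s hs
    simpa only [mul_inv_rev, mul_assoc] using hu _ (hv s hs)

theorem ker_eq_bot_of_le_range_base {H : Type*} [Group H] {ψ : PushoutI φ →* H} (i : ι)
    (hi : Function.Injective (ψ.comp (of i))) (hle : ψ.ker ≤ (base φ).range) : ψ.ker = ⊥ := by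
  refine (Subgroup.eq_bot_iff_forall _).mpr fun n hn => ?_
  obtain ⟨f, rfl⟩ := hle hn
  rw [← of_apply_eq_base φ i] at hn ⊢
  rw [hi (hn.trans (map_one _).symm), map_one]

end

section

variable {G : Bool → Type*} [∀ b, Group (G b)] {φ : ∀ b, F →* G b}

theorem infinite_of_index_eq_two (hidx : ∀ b, (φ b).range.index = 2) :
    Infinite (PushoutI φ) := by
  choose x hx using fun b => Subgroup.exists_notMem_of_index_eq_two (hidx b)
  let σ : PushoutI φ →* DihedralGroup 0 := lift
    (fun b => (φ b).range.indexTwoHom (hidx b) (.sr (cond b 0 1)) (DihedralGroup.sr_mul_self _))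
    1 fun b => by
      ext f
      exact Subgroup.indexTwoHom_apply_of_mem (hidx b) (DihedralGroup.sr_mul_self _) ⟨f, rfl⟩
  have hσ : σ (of true (x true) * of false (x false)) = .r 1 := by
    simp only [σ, map_mul, lift_of, Subgroup.indexTwoHom_apply_of_notMem _ _ (hx _),
      DihedralGroup.sr_mul_sr, cond_true, cond_false, sub_zero]
  refine not_finite_iff_infinite.mp fun _ => ?_
  have := σ.isOfFinOrder (isOfFinOrder_of_finite (of true (x true) * of false (x false)))
  rw [hσ, ← orderOf_pos_iff, DihedralGroup.orderOf_r_one] at this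
  exact lt_irrefl 0 this

theorem closure_mk_of_pair_eq_top [(base φ).range.Normal] (hidx : ∀ b, (φ b).range.index = 2)
    {x : ∀ b, G b} (hx : ∀ b, x b ∉ (φ b).range) :
    Subgroup.closure {(of (φ := φ) true (x true) : PushoutI φ ⧸ (base φ).range),
      (of (φ := φ) false (x false) : PushoutI φ ⧸ (base φ).range)} = ⊤ := by
  refine (Subgroup.eq_top_iff' _).mpr fun q => ?_
  obtain ⟨g, rfl⟩ := QuotientGroup.mk_surjective q
  induction g using induction_on with
  | of b g =>
    by_cases hg : g ∈ (φ b).range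
    · rw [(QuotientGroup.eq_one_iff _).mpr (of_mem_range_base hg)]
      exact one_mem _
    · have hgx : (of (φ := φ) b g : PushoutI φ ⧸ (base φ).range) = (of (φ := φ) b (x b) : _) := by
        refine QuotientGroup.eq.mpr ?_
        rw [← map_inv, ← map_mul]
        refine of_mem_range_base ?_
        simp [Subgroup.mul_mem_iff_of_index_two (hidx b), hg, hx b]
      rw [hgx]
      cases b
      · exact Subgroup.subset_closure (.inr rfl)
      · exact Subgroup.subset_closure (.inl rfl)
  | base f =>
    rw [(QuotientGroup.eq_one_iff (N := (base φ).range) (base φ f)).mpr ⟨f, rfl⟩]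
    exact one_mem _
  | mul u v hu hv => exact mul_mem hu hv

theorem mk_of_mul_self_eq_one [(base φ).range.Normal] (hidx : ∀ b, (φ b).range.index = 2) (b : Bool)
    (g : G b) :
    (of (φ := φ) b g : PushoutI φ ⧸ (base φ).range) * (of (φ := φ) b g : _) = 1 := by
  rw [← QuotientGroup.mk_mul, ← map_mul, QuotientGroup.eq_one_iff]
  exact of_mem_range_base (Subgroup.mul_self_mem_of_index_two (hidx b) g)

end

end Monoid.PushoutI

theorem stmt_5_general (F : Type*) [Group F] [Finite F] (G : Bool → Type*) [∀ b, Group (G b)]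
    (φ : ∀ b, F →* G b)
    (hidx : ∀ b, (φ b).range.index = 2)
    (H : Type*) [Group H] (ψ : Monoid.PushoutI φ →* H)
    (hres : ∀ b, Function.Injective (ψ.comp (Monoid.PushoutI.of (φ := φ) b))) :
    Function.Injective ψ ↔ Infinite ψ.range := by
  refine ⟨fun hψ => ?_, fun hinf => ?_⟩
  · have := Monoid.PushoutI.infinite_of_index_eq_two hidx
    exact Infinite.of_injective ψ.rangeRestrict fun _ _ h => hψ (congrArg Subtype.val h)
  set F' := (Monoid.PushoutI.base φ).range
  rw [← ψ.ker_eq_bot_iff]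
  refine Monoid.PushoutI.ker_eq_bot_of_le_range_base true (hres true) ?_
  by_contra hle
  have := Monoid.PushoutI.normal_range_base fun b => Subgroup.normal_of_index_eq_two (hidx b)
  choose x hx using fun b => Subgroup.exists_notMem_of_index_eq_two (hidx b)
  have : Finite (_ ⧸ ψ.ker.map (QuotientGroup.mk' F')) :=
    InvolutionPair.finite_quotient_of_ne_bot
      (Monoid.PushoutI.mk_of_mul_self_eq_one hidx true (x true))
      (Monoid.PushoutI.mk_of_mul_self_eq_one hidx false (x false))
      (Monoid.PushoutI.closure_mk_of_pair_eq_top hidx hx)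
      _ (by rwa [Ne, Subgroup.map_eq_bot_iff, QuotientGroup.ker_mk'])
  have hsup : (ψ.ker ⊔ F').index ≠ 0 := by
    rw [← QuotientGroup.ker_mk' F', ← Subgroup.comap_map_eq,
      Subgroup.index_comap_of_surjective _ (QuotientGroup.mk'_surjective _)]
    exact Subgroup.index_ne_zero_of_finite
  have : Finite F' := Finite.of_surjective _ (Monoid.PushoutI.base φ).rangeRestrict_surjective
  have hker := Subgroup.index_ne_zero_of_index_sup_ne_zero hsup
  rw [Subgroup.index_ker] at hker
  have := Nat.finite_of_card_ne_zero hker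
  exact not_finite ψ.range

/-- Let `G = G₁ *_F G₂` be a virtually cyclic group of Type II, i.e. `F, G₁, G₂` are finite
and `F` embeds in each `Gᵢ` with index `2`. If `ψ : G₁ *_F G₂ →* H` is a homomorphism whose
restriction to each `Gᵢ` is injective, then `ψ` is injective if and only if its image is
infinite. -/
theorem stmt_5 (F : Type*) [Group F] [Finite F] (G : Bool → Type*) [∀ b, Group (G b)]
    [∀ b, Finite (G b)] (φ : ∀ b, F →* G b)
    (hinj : ∀ b, Function.Injective (φ b))
    (hidx : ∀ b, (φ b).range.index = 2)
    (H : Type*) [Group H] (ψ : Monoid.PushoutI φ →* H)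
    (hres : ∀ b, Function.Injective (ψ.comp (Monoid.PushoutI.of (φ := φ) b))) :
    Function.Injective ψ ↔ Infinite ψ.range :=
  stmt_5_general F G φ hidx H ψ hres
end

section
/- Let G₁ and G₂ be groups, each with a subgroup Hᵢ ⊆ Gᵢ of index 2, and let i₁ : H → H₁, i₂ : H → H₂ be isomorphisms from an abstract group H. Suppose the isomorphism i₂ ∘ i₁⁻¹ : H₁ → H₂ extends to an isomorphism ι : G₁ → G₂. Then the amalgamated product G₁ *_H G₂ is isomorphic to a semidirect product ℤ ⋊ G₂, where the action is given by: elements of H₂ fix a generator t of ℤ, and elements of G₂ \ H₂ send t to t⁻¹. -/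
/-!
Fix `a ∈ G₂ \ H₂` and, for `g ∈ G₂`, write `g'` for `ι⁻¹ g ∈ G₁`. In the pushout `g' = g` for
`g ∈ H₂`, so, `H₂` having index 2, `g' g⁻¹` is `1` on `H₂` and equal to `t := a' a⁻¹` off `H₂`.
The identity `g (x' x⁻¹) g⁻¹ = (g' g⁻¹)⁻¹ ((g x)' (g x)⁻¹)` at `x = a` then shows that
conjugation by `g` fixes `t` or inverts it according as `g ∈ H₂`, so `t ↦ t`, `g ↦ g` defines
`ℤ ⋊ G₂ → G₁ *_H G₂`. The inverse sends `g ∈ G₂` to `g` and `g' ∈ G₁` to `t^[g ∉ H₂] g`, which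
is multiplicative because `g ↦ t^[g ∉ H₂]` is a crossed homomorphism for the sign action.
-/

open Monoid Multiplicative SemidirectProduct

theorem MonoidHom.conj_mul_inv_eq {G P : Type*} [Group G] [Group P] (i j : G →* P) (g x : G) :
    j g * (i x * (j x)⁻¹) * (j g)⁻¹ = (i g * (j g)⁻¹)⁻¹ * (i (g * x) * (j (g * x))⁻¹) := by
  simp only [map_mul]
  group

namespace Subgroup

variable {G : Type*} [Group G] {K : Subgroup G} (hK : K.index = 2)

section signHom

variable {M : Type*} [Monoid M] (m : M) (hm : m * m = 1) {g : G}

open Classical in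
noncomputable def signHom : G →* M where
  toFun g := if g ∈ K then 1 else m
  map_one' := if_pos K.one_mem
  map_mul' g₁ g₂ := by
    by_cases h₁ : g₁ ∈ K <;> by_cases h₂ : g₂ ∈ K <;>
      simp [mul_mem_iff_of_index_two hK, h₁, h₂, hm]

theorem signHom_apply_of_mem (hg : g ∈ K) : signHom hK m hm g = 1 := by
  simp [signHom, hg]

theorem signHom_apply_of_notMem (hg : g ∉ K) : signHom hK m hm g = m := by
  simp [signHom, hg]

end signHom

section invAction

variable (N : Type*) [CommGroup N] {g : G}

noncomputable def invAction : G →* MulAut N :=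
  signHom hK (MulEquiv.inv N) (by ext; simp)

variable {N}

theorem invAction_apply_of_mem (hg : g ∈ K) (n : N) : invAction hK N g n = n := by
  simp [invAction, signHom_apply_of_mem hK _ _ hg]

theorem invAction_apply_of_notMem (hg : g ∉ K) (n : N) : invAction hK N g n = n⁻¹ := by
  simp [invAction, signHom_apply_of_notMem hK _ _ hg]

open Classical in
noncomputable def invActionSection (n : N) : G →* N ⋊[invAction hK N] G where
  toFun g := ⟨if g ∈ K then 1 else n, g⟩
  map_one' := by ext <;> simp [K.one_mem]
  map_mul' g₁ g₂ := by
    ext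
    · by_cases h₁ : g₁ ∈ K <;> by_cases h₂ : g₂ ∈ K <;>
        simp [mul_mem_iff_of_index_two hK, h₁, h₂, invAction_apply_of_mem,
          invAction_apply_of_notMem]
    · rfl

theorem invActionSection_apply_of_mem (n : N) (hg : g ∈ K) :
    invActionSection hK n g = inr g := by
  ext <;> simp [invActionSection, hg]

theorem invActionSection_apply_of_notMem (n : N) (hg : g ∉ K) :
    invActionSection hK n g = inl n * inr g := by
  ext <;> simp [invActionSection, hg]

end invAction

section agree

variable {P : Type*} [Group P] {i j : G →* P} (hij : ∀ k ∈ K, i k = j k) {a : G} (ha : a ∉ K)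
include hK hij ha

theorem mul_inv_eq_of_notMem_of_index_two {g : G} (hg : g ∉ K) :
    i g * (j g)⁻¹ = i a * (j a)⁻¹ := by
  have hag : a⁻¹ * g ∈ K := by simp [mul_mem_iff_of_index_two hK, ha, hg]
  have := hij _ hag
  simp only [map_mul, map_inv] at this
  rw [mul_inv_eq_iff_eq_mul, mul_assoc, ← inv_mul_eq_iff_eq_mul, this]

theorem conj_mul_inv_eq_self_of_mem_of_index_two {g : G} (hg : g ∈ K) :
    j g * (i a * (j a)⁻¹) * (j g)⁻¹ = i a * (j a)⁻¹ := by
  have hga : g * a ∉ K := by simp [mul_mem_iff_of_index_two hK, ha, hg]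
  rw [MonoidHom.conj_mul_inv_eq, hij g hg, mul_inv_cancel, inv_one, one_mul,
    mul_inv_eq_of_notMem_of_index_two hK hij ha hga]

theorem conj_mul_inv_eq_inv_of_notMem_of_index_two {g : G} (hg : g ∉ K) :
    j g * (i a * (j a)⁻¹) * (j g)⁻¹ = (i a * (j a)⁻¹)⁻¹ := by
  have hga : g * a ∈ K := by simp [mul_mem_iff_of_index_two hK, ha, hg]
  rw [MonoidHom.conj_mul_inv_eq, hij _ hga, mul_inv_cancel, mul_one,
    mul_inv_eq_of_notMem_of_index_two hK hij ha hg]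

theorem zpowersHom_comp_invAction (g : G) :
    (zpowersHom P (i a * (j a)⁻¹)).comp (invAction hK (Multiplicative ℤ) g).toMonoidHom =
      (MulAut.conj (j g)).toMonoidHom.comp (zpowersHom P (i a * (j a)⁻¹)) := by
  refine MonoidHom.ext_mint ?_
  by_cases hg : g ∈ K
  · simp [invAction_apply_of_mem hK hg,
      conj_mul_inv_eq_self_of_mem_of_index_two hK hij ha hg]
  · simp [invAction_apply_of_notMem hK hg,
      conj_mul_inv_eq_inv_of_notMem_of_index_two hK hij ha hg]

end agree

end Subgroup

namespace Monoid.PushoutI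

variable {H : Type*} [Group H] {G : Bool → Type*} [∀ b, Group (G b)] {φ : ∀ b, H →* G b}
  (hK : (φ true).range.index = 2) (ι : G false ≃* G true) (hι : ∀ h, ι (φ false h) = φ true h)

include hι in
theorem of_false_symm_eq_of_true {g : G true} (hg : g ∈ (φ true).range) :
    of (φ := φ) false (ι.symm g) = of true g := by
  obtain ⟨x, rfl⟩ := hg
  rw [← hι, ι.symm_apply_apply, of_apply_eq_base, hι, of_apply_eq_base]

noncomputable def toSemidirectProduct :
    PushoutI φ →* Multiplicative ℤ ⋊[Subgroup.invAction hK _] G true :=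
  lift (fun b => Bool.rec ((Subgroup.invActionSection hK (ofAdd 1)).comp ι.toMonoidHom) inr b)
    (inr.comp (φ true)) <| by
      rintro (_ | _)
      · exact MonoidHom.ext fun x => by simp [hι, Subgroup.invActionSection_apply_of_mem]
      · rfl

theorem toSemidirectProduct_of_false (g : G false) :
    toSemidirectProduct hK ι hι (of false g) = Subgroup.invActionSection hK (ofAdd 1) (ι g) :=
  lift_of _ _ _ g

theorem toSemidirectProduct_of_true (g : G true) :
    toSemidirectProduct hK ι hι (of true g) = inr g :=
  lift_of _ _ _ g

variable {a : G true} (ha : a ∉ (φ true).range)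

noncomputable def ofSemidirectProduct :
    Multiplicative ℤ ⋊[Subgroup.invAction hK _] G true →* PushoutI φ :=
  SemidirectProduct.lift _ (of true) <|
    Subgroup.zpowersHom_comp_invAction hK (i := (of (φ := φ) false).comp ι.symm.toMonoidHom)
      (fun _ => of_false_symm_eq_of_true ι hι) ha

theorem ofSemidirectProduct_inl_ofAdd_one :
    ofSemidirectProduct hK ι hι ha (inl (ofAdd 1)) = of false (ι.symm a) * (of true a)⁻¹ := by
  simp [ofSemidirectProduct]

theorem ofSemidirectProduct_inr (g : G true) :
    ofSemidirectProduct hK ι hι ha (inr g) = of true g := by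
  simp [ofSemidirectProduct]

theorem ofSemidirectProduct_comp_toSemidirectProduct :
    (ofSemidirectProduct hK ι hι ha).comp (toSemidirectProduct hK ι hι) = MonoidHom.id _ := by
  refine hom_ext_nonempty fun b => MonoidHom.ext fun g => ?_
  cases b
  · obtain ⟨g, rfl⟩ := ι.symm.surjective g
    simp only [MonoidHom.comp_apply, MonoidHom.id_apply, toSemidirectProduct_of_false,
      MulEquiv.apply_symm_apply]
    by_cases hg : g ∈ (φ true).range
    · rw [Subgroup.invActionSection_apply_of_mem hK _ hg, ofSemidirectProduct_inr,
        of_false_symm_eq_of_true ι hι hg]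
    · rw [Subgroup.invActionSection_apply_of_notMem hK _ hg, map_mul,
        ofSemidirectProduct_inl_ofAdd_one, ofSemidirectProduct_inr, ← eq_mul_inv_iff_mul_eq]
      exact (Subgroup.mul_inv_eq_of_notMem_of_index_two hK
        (i := (of (φ := φ) false).comp ι.symm.toMonoidHom) (j := of true)
        (fun _ => of_false_symm_eq_of_true ι hι) ha hg).symm
  · simp [toSemidirectProduct_of_true, ofSemidirectProduct_inr]

theorem toSemidirectProduct_comp_ofSemidirectProduct :
    (toSemidirectProduct hK ι hι).comp (ofSemidirectProduct hK ι hι ha) = MonoidHom.id _ := by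
  refine SemidirectProduct.hom_ext (MonoidHom.ext_mint ?_) (MonoidHom.ext fun g => ?_)
  · simp [ofSemidirectProduct_inl_ofAdd_one, toSemidirectProduct_of_false,
      toSemidirectProduct_of_true, Subgroup.invActionSection_apply_of_notMem hK _ ha]
  · simp [ofSemidirectProduct_inr, toSemidirectProduct_of_true]

noncomputable def mulEquivSemidirectProduct :
    PushoutI φ ≃* Multiplicative ℤ ⋊[Subgroup.invAction hK _] G true :=
  MonoidHom.toMulEquiv _ _ (ofSemidirectProduct_comp_toSemidirectProduct hK ι hι ha)
    (toSemidirectProduct_comp_ofSemidirectProduct hK ι hι ha)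

end Monoid.PushoutI

theorem stmt_6_general (H : Type*) [Group H] (G : Bool → Type*) [∀ b, Group (G b)]
    (φ : ∀ b, H →* G b)
    (hidx : ∀ b, (φ b).range.index = 2)
    (ι : G false ≃* G true) (hι : ∀ h : H, ι (φ false h) = φ true h) :
    ∃ ψ : G true →* MulAut (Multiplicative ℤ),
      (∀ g : G true,
        (g ∈ (φ true).range → ∀ t, ψ g t = t) ∧
        (g ∉ (φ true).range → ∀ t, ψ g t = t⁻¹)) ∧
      Nonempty (Monoid.PushoutI φ ≃* Multiplicative ℤ ⋊[ψ] G true) := by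
  obtain ⟨a, ha, -⟩ := Subgroup.index_eq_two_iff_exists_notMem_and.1 (hidx true)
  exact ⟨Subgroup.invAction (hidx true) _, fun g =>
    ⟨Subgroup.invAction_apply_of_mem (hidx true), Subgroup.invAction_apply_of_notMem (hidx true)⟩,
    ⟨PushoutI.mulEquivSemidirectProduct (hidx true) ι hι ha⟩⟩

/-- Let `G₁, G₂` be groups with subgroups `H₁ = (φ false).range`, `H₂ = (φ true).range` of
index `2`, both isomorphic to an abstract group `H` via the embeddings `φ b : H →* G b`.
If the isomorphism `i₂ ∘ i₁⁻¹ : H₁ → H₂` extends to an isomorphism `ι : G₁ ≃* G₂`, then the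
amalgamated product `G₁ *_H G₂` is isomorphic to a semidirect product `ℤ ⋊ G₂`, where
elements of `H₂` fix a generator `t` of `ℤ` and elements of `G₂ \ H₂` invert it. -/
theorem stmt_6 (H : Type*) [Group H] (G : Bool → Type*) [∀ b, Group (G b)]
    (φ : ∀ b, H →* G b)
    (hinj : ∀ b, Function.Injective (φ b))
    (hidx : ∀ b, (φ b).range.index = 2)
    (ι : G false ≃* G true) (hι : ∀ h : H, ι (φ false h) = φ true h) :
    ∃ ψ : G true →* MulAut (Multiplicative ℤ),
      (∀ g : G true,
        (g ∈ (φ true).range → ∀ t, ψ g t = t) ∧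
        (g ∉ (φ true).range → ∀ t, ψ g t = t⁻¹)) ∧
      Nonempty (Monoid.PushoutI φ ≃* Multiplicative ℤ ⋊[ψ] G true) :=
  stmt_6_general H G φ hidx ι hι
end

section
/- Let G be a group with a unique element x of order 2 and let p : G → G/⟨x⟩ be the canonical projection. If H is a subgroup of G isomorphic to a semidirect product F ⋊_θ ℤ with F a finite subgroup of G, then p(H) is isomorphic to p(F) ⋊_θ' ℤ, where θ'(1) is the automorphism of p(F) induced by θ(1) (i.e., θ'(1)(p(f)) = p(θ(1)(f)) for all f ∈ F). -/
/-!
Since `x` is the unique involution of `G`, the kernel `F ∩ ⟨x⟩` of `p` restricted to `F` is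
characteristic in `F`, so `θ` descends to an automorphism `θ'` of `p(F)`, and `p` induces a
surjection `H ≃ F ⋊_θ ℤ → p(F) ⋊_θ' ℤ`. Its kernel is `H ∩ ker p`: the elements of `ker p` have
finite order, and every element of finite order of `F ⋊ ℤ` lies in `F` because `ℤ` is
torsion-free.
-/

open Function

section UniqueInvolution

variable {G : Type*} [Group G] {x : G}

lemma mem_zpowers_iff_of_orderOf_eq_two (hx : orderOf x = 2) {g : G} :
    g ∈ Subgroup.zpowers x ↔ g = 1 ∨ g = x := by
  classical
  rw [(orderOf_pos_iff.mp (by omega : 0 < orderOf x)).mem_zpowers_iff_mem_range_orderOf, hx]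
  simp only [Finset.range_add_one, Finset.range_zero]
  simp [eq_comm, or_comm]

lemma coe_mulAut_apply_eq_of_unique_involution (hx : orderOf x = 2)
    (huniq : ∀ y : G, orderOf y = 2 → y = x) {K : Subgroup G} (σ : MulAut K) {k : K}
    (hk : (k : G) = x) : (σ k : G) = x :=
  huniq _ (by rw [Subgroup.orderOf_coe, MulEquiv.orderOf_eq, ← Subgroup.orderOf_coe, hk, hx])

lemma characteristic_zpowers_subgroupOf_of_unique_involution (hx : orderOf x = 2)
    (huniq : ∀ y : G, orderOf y = 2 → y = x) (K : Subgroup G) :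
    ((Subgroup.zpowers x).subgroupOf K).Characteristic := by
  refine Subgroup.characteristic_iff_le_comap.mpr fun σ k hk => ?_
  simp only [Subgroup.mem_comap, Subgroup.mem_subgroupOf, mem_zpowers_iff_of_orderOf_eq_two hx]
    at hk ⊢
  rcases hk with hk | hk
  · left
    simp [OneMemClass.coe_eq_one.mp hk]
  · exact Or.inr (coe_mulAut_apply_eq_of_unique_involution hx huniq σ hk)

end UniqueInvolution

section Descend

variable {A B : Type*} [Group A] [Group B]

noncomputable def MulAut.descend (q : A →* B) (hq : Surjective q) (hker : q.ker.Characteristic)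
    (σ : MulAut A) : MulAut B :=
  (QuotientGroup.quotientKerEquivOfSurjective q hq).symm.trans <|
    (QuotientGroup.congr q.ker q.ker σ (Subgroup.characteristic_iff_map_eq.mp hker σ)).trans
      (QuotientGroup.quotientKerEquivOfSurjective q hq)

lemma MulAut.descend_apply (q : A →* B) (hq : Surjective q) (hker : q.ker.Characteristic)
    (σ : MulAut A) (a : A) : σ.descend q hq hker (q a) = q (σ a) := by
  have hmk : (QuotientGroup.quotientKerEquivOfSurjective q hq).symm (q a) = a :=
    (MulEquiv.symm_apply_eq _).mpr rfl
  simp only [MulAut.descend, MulEquiv.trans_apply, hmk]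
  rfl

lemma MulAut.zpow_apply_map_of_apply_map (q : A →* B) {σ : MulAut A} {τ : MulAut B}
    (h : ∀ a, τ (q a) = q (σ a)) (n : ℤ) (a : A) : (τ ^ n) (q a) = q ((σ ^ n) a) := by
  induction n using Int.induction_on generalizing a with
  | zero => rfl
  | succ k ih => rw [zpow_add_one, zpow_add_one, MulAut.mul_apply, MulAut.mul_apply, h, ih]
  | pred k ih =>
    have h' : τ⁻¹ (q a) = q (σ⁻¹ a) := by
      rw [MulAut.inv_apply, MulEquiv.symm_apply_eq, h, ← MulAut.mul_apply, mul_inv_cancel]; rfl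
    rw [zpow_sub_one, zpow_sub_one, MulAut.mul_apply, MulAut.mul_apply, h', ih]

lemma MulAut.comp_zpowersHom_eq (q : A →* B) {σ : MulAut A} {τ : MulAut B}
    (h : ∀ a, τ (q a) = q (σ a)) (g : Multiplicative ℤ) :
    q.comp (zpowersHom (MulAut A) σ g).toMonoidHom =
      (zpowersHom (MulAut B) τ (MonoidHom.id _ g)).toMonoidHom.comp q :=
  MonoidHom.ext fun a => (MulAut.zpow_apply_map_of_apply_map q h g.toAdd a).symm

end Descend

namespace SemidirectProduct

variable {N K : Type*} [Group N] [Group K] {φ : K →* MulAut N}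

lemma map_surjective {N₂ K₂ : Type*} [Group N₂] [Group K₂] {φ₂ : K₂ →* MulAut N₂}
    {fn : N →* N₂} {fg : K →* K₂}
    (h : ∀ g : K, fn.comp (φ g).toMonoidHom = (φ₂ (fg g)).toMonoidHom.comp fn)
    (hn : Surjective fn) (hg : Surjective fg) : Surjective (map fn fg h) := by
  rintro ⟨b, k⟩
  obtain ⟨a, rfl⟩ := hn b
  obtain ⟨g, rfl⟩ := hg k
  exact ⟨⟨a, g⟩, rfl⟩

lemma eq_inl_left_of_right_eq_one {g : N ⋊[φ] K} (hg : g.right = 1) : g = inl g.left := by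
  ext <;> simp [hg]

lemma right_eq_one_of_isOfFinOrder [IsMulTorsionFree K] {g : N ⋊[φ] K} (hg : IsOfFinOrder g) :
    g.right = 1 :=
  (isOfFinOrder_iff_eq_one _).mp (rightHom.isOfFinOrder hg)

end SemidirectProduct

open SemidirectProduct in
lemma ker_map_subgroupMap_comp_eq_ker_subgroupMap {G G' K : Type*} [Group G] [Group G'] [Group K]
    [IsMulTorsionFree K] (p : G →* G') (htors : ∀ g, p g = 1 → IsOfFinOrder g)
    {F H : Subgroup G} (hFH : F ≤ H) {φ : K →* MulAut F} {φ₂ : K →* MulAut (F.map p)}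
    (h : ∀ g : K, (p.subgroupMap F).comp (φ g).toMonoidHom =
      (φ₂ (MonoidHom.id K g)).toMonoidHom.comp (p.subgroupMap F))
    (e : H ≃* F ⋊[φ] K) (he : ∀ f : F, e ⟨f, hFH f.2⟩ = inl f) :
    ((map (p.subgroupMap F) (MonoidHom.id K) h).comp e.toMonoidHom).ker =
      (p.subgroupMap H).ker := by
  have hF : ∀ f : F, map (p.subgroupMap F) (MonoidHom.id K) h (e ⟨f, hFH f.2⟩) = 1 ↔
      p.subgroupMap H ⟨f, hFH f.2⟩ = 1 := by
    intro f
    simp [he, map_eq_one_iff _ inl_injective, Subtype.ext_iff]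
  have hrange : ∀ k : H, (e k).right = 1 → ∃ f : F, k = ⟨f, hFH f.2⟩ := fun k hk =>
    ⟨(e k).left, e.injective (by rw [he, ← eq_inl_left_of_right_eq_one hk])⟩
  ext k
  simp only [MonoidHom.mem_ker, MonoidHom.comp_apply, MulEquiv.coe_toMonoidHom]
  constructor
  · intro hk
    obtain ⟨f, rfl⟩ := hrange k (congrArg right hk)
    exact (hF f).1 hk
  · intro hk
    have hfin : IsOfFinOrder k :=
      (Subgroup.subtype_injective H).isOfFinOrder_iff.mp (htors _ (congrArg Subtype.val hk))
    obtain ⟨f, rfl⟩ := hrange k (right_eq_one_of_isOfFinOrder (e.toMonoidHom.isOfFinOrder hfin))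
    exact (hF f).2 hk

theorem stmt_9_general (G G' : Type*) [Group G] [Group G'] (x : G)
    (hx : orderOf x = 2) (huniq : ∀ y : G, orderOf y = 2 → y = x)
    (p : G →* G')
    (hker : p.ker = Subgroup.zpowers x)
    (F H : Subgroup G) (hFH : F ≤ H)
    (θ : MulAut F)
    (e : H ≃* F ⋊[zpowersHom (MulAut F) θ] Multiplicative ℤ)
    (hcompat : ∀ f : F, e ⟨(f : G), hFH f.2⟩ = SemidirectProduct.inl f) :
    ∃ θ' : MulAut (F.map p),
      (∀ f : F, (θ' ⟨p f, Subgroup.mem_map_of_mem p f.2⟩ : G') = p (θ f)) ∧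
      Nonempty (H.map p ≃*
        (F.map p) ⋊[zpowersHom (MulAut (F.map p)) θ'] Multiplicative ℤ) := by
  have hkerF : (p.subgroupMap F).ker.Characteristic := by
    rw [Subgroup.ker_subgroupMap, hker]
    exact characteristic_zpowers_subgroupOf_of_unique_involution hx huniq F
  set θ' := θ.descend (p.subgroupMap F) (p.subgroupMap_surjective F) hkerF
  have hθ' : ∀ f, θ' (p.subgroupMap F f) = p.subgroupMap F (θ f) :=
    MulAut.descend_apply _ _ hkerF θ
  have hcomp := MulAut.comp_zpowersHom_eq (p.subgroupMap F) hθ'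
  have htors : ∀ g, p g = 1 → IsOfFinOrder g := fun g hg =>
    (orderOf_pos_iff.mp (by omega : 0 < orderOf x)).of_mem_zpowers (hker ▸ hg)
  refine ⟨θ', fun f => congrArg Subtype.val (hθ' f), ⟨?_⟩⟩
  exact (QuotientGroup.quotientKerEquivOfSurjective _ (p.subgroupMap_surjective H)).symm.trans <|
    (QuotientGroup.quotientMulEquivOfEq
      (ker_map_subgroupMap_comp_eq_ker_subgroupMap p htors hFH hcomp e hcompat).symm).trans <|
    QuotientGroup.quotientKerEquivOfSurjective _ <|
      (SemidirectProduct.map_surjective hcomp (p.subgroupMap_surjective F) surjective_id).comp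
        e.surjective

/-- Let `G` be a group with a unique element `x` of order `2` and canonical projection
`p : G → G' = G/⟨x⟩`. If `H` is a subgroup of `G` which is a semidirect product
`F ⋊_θ ℤ`, where `F ≤ H` is a finite subgroup of `G` and the isomorphism restricts to
the identity on `F`, then `p(H)` is isomorphic to `p(F) ⋊_θ' ℤ` where `θ'(1)` is the
automorphism of `p(F)` induced by `θ(1)`, i.e. `θ'(1)(p(f)) = p(θ(1)(f))` for `f ∈ F`. -/
theorem stmt_9 (G G' : Type*) [Group G] [Group G'] (x : G)
    (hx : orderOf x = 2) (huniq : ∀ y : G, orderOf y = 2 → y = x)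
    (p : G →* G') (hsurj : Function.Surjective p)
    (hker : p.ker = Subgroup.zpowers x)
    (F H : Subgroup G) (hFH : F ≤ H) (hFfin : Finite F)
    (θ : MulAut F)
    (e : H ≃* F ⋊[zpowersHom (MulAut F) θ] Multiplicative ℤ)
    (hcompat : ∀ f : F, e ⟨(f : G), hFH f.2⟩ = SemidirectProduct.inl f) :
    ∃ θ' : MulAut (F.map p),
      (∀ f : F, (θ' ⟨p f, Subgroup.mem_map_of_mem p f.2⟩ : G') = p (θ f)) ∧
      Nonempty (H.map p ≃*
        (F.map p) ⋊[zpowersHom (MulAut (F.map p)) θ'] Multiplicative ℤ) :=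
  stmt_9_general G G' x hx huniq p hker F H hFH θ e hcompat
end

section
/- Up to isomorphism, there are exactly three semidirect products of the quaternion group Q₈ by ℤ: the direct product Q₈ × ℤ, the semidirect product Q₈ ⋊_α ℤ where α(1) cyclically permutes i, j, k, and the semidirect product Q₈ ⋊_β ℤ where β(1) sends i to k and j to j⁻¹. In particular, for any θ : ℤ → Aut(Q₈), the group Q₈ ⋊_θ ℤ is isomorphic to one of these three groups. -/
/-!
The isomorphism type of `N ⋊_θ ℤ` depends only on the class of `θ` in `Out N` up to conjugacy:
twisting `θ` by the inner automorphism of `c` is absorbed by replacing the generator `t` of `ℤ`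
with `c t`, and conjugating `θ` by `σ` is undone by `σ × id`. For `Q₈` an automorphism is
determined by the images of `i` and `j`, so a finite check shows that every `θ` reduces in this
way to `1`, `α` or `β`, reflecting the three conjugacy classes of `Out Q₈ ≅ S₃`. The three groups
are told apart by counting homomorphisms to `C₂`: since `Hom(N ⋊_θ ℤ, A) ≃ Hom(N, A)^θ × A` for
abelian `A`, the counts are `4 · 2`, `1 · 2` and `2 · 2`.
-/

local notation:35 N " ⋊ℤ[" θ "]" => N ⋊[zpowersHom (MulAut N) θ] Multiplicative ℤ

local notation "Q₈" => QuaternionGroup 2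

local notation "C₂" => Multiplicative (ZMod 2)

namespace QuaternionGroup

variable {n : ℕ} {M : Type*} [Monoid M]

/-- With `i = a 1` and `j = xa 0`, every element of `QuaternionGroup n` is `i ^ k` or `j * i ^ k`;
`ofImages p q` is the candidate homomorphism sending `i ↦ p` and `j ↦ q`. -/
def ofImages (p q : M) : QuaternionGroup n → M
  | a k => p ^ k.val
  | xa k => q * p ^ k.val

variable [NeZero n]

theorem eq_ofImages (f : QuaternionGroup n →* M) : ⇑f = ofImages (f (a 1)) (f (xa 0)) := by
  funext x
  cases x with
  | a k =>
    show f (a k) = f (a 1) ^ k.val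
    rw [← map_pow, a_one_pow, ZMod.natCast_zmod_val]
  | xa k =>
    show f (xa k) = f (xa 0) * f (a 1) ^ k.val
    rw [← map_pow, ← map_mul, a_one_pow, xa_mul_a, zero_add, ZMod.natCast_zmod_val]

theorem hom_ext {f g : QuaternionGroup n →* M} (h₁ : f (a 1) = g (a 1))
    (h₂ : f (xa 0) = g (xa 0)) : f = g :=
  DFunLike.coe_injective <| by rw [eq_ofImages f, eq_ofImages g, h₁, h₂]

theorem mulAut_ext {f g : MulAut (QuaternionGroup n)} (h₁ : f (a 1) = g (a 1))
    (h₂ : f (xa 0) = g (xa 0)) : f = g :=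
  MulEquiv.toMonoidHom_injective (hom_ext h₁ h₂)

def homEquivImages : (QuaternionGroup n →* M) ≃
    {pq : M × M // ∀ x y : QuaternionGroup n,
      ofImages pq.1 pq.2 (x * y) = ofImages pq.1 pq.2 x * ofImages pq.1 pq.2 y} where
  toFun f := ⟨(f (a 1), f (xa 0)), by rw [← eq_ofImages]; exact map_mul f⟩
  invFun pq :=
    { toFun := ofImages pq.1.1 pq.1.2
      map_one' := by rw [one_def]; simp [ofImages]
      map_mul' := pq.2 }
  left_inv f := DFunLike.coe_injective (eq_ofImages f).symm
  right_inv pq := by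
    have : (1 : ZMod (2 * n)).val = 1 := ZMod.val_one'' (by have := NeZero.ne n; omega)
    ext <;> simp [ofImages, this]

theorem card_monoidHom_fixed [Fintype M] [DecidableEq M] (θ : MulAut (QuaternionGroup n)) :
    Nat.card {f : QuaternionGroup n →* M // ∀ x, f (θ x) = f x} =
      Fintype.card {pq : M × M // (∀ x y : QuaternionGroup n,
        ofImages pq.1 pq.2 (x * y) = ofImages pq.1 pq.2 x * ofImages pq.1 pq.2 y) ∧
        ∀ x, ofImages pq.1 pq.2 (θ x) = ofImages pq.1 pq.2 x} := by
  rw [← Nat.card_eq_fintype_card]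
  refine Nat.card_congr <| (homEquivImages.subtypeEquiv fun f => ?_).trans
    (Equiv.subtypeSubtypeEquivSubtypeInter _ _)
  rw [eq_ofImages f]
  simp [homEquivImages]

end QuaternionGroup

section SemidirectProductInt

open SemidirectProduct Multiplicative

variable {N H : Type*} [Group N] [Group H]

theorem MonoidHom.map_mulAut_zpow_apply (f : N →* H) {θ : MulAut N} {u : H}
    (h : ∀ x, f (θ x) = u * f x * u⁻¹) (m : ℤ) (x : N) :
    f ((θ ^ m) x) = u ^ m * f x * (u ^ m)⁻¹ := by
  have h' (x : N) : f (θ⁻¹ x) = u⁻¹ * f x * u := by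
    have := h (θ⁻¹ x)
    rw [MulAut.apply_inv_self] at this
    rw [this]; group
  induction m using Int.induction_on generalizing x with
  | zero => simp
  | succ m ih => rw [zpow_add_one, MulAut.mul_apply, ih, h, zpow_add_one]; group
  | pred m ih => rw [zpow_sub_one, MulAut.mul_apply, ih, h', zpow_sub_one]; group

namespace SemidirectProduct

variable {θ : MulAut N}

theorem inr_mul_inl_mul_inr_inv (x : N) :
    (inr (ofAdd 1) * inl x * (inr (ofAdd 1))⁻¹ : N ⋊ℤ[θ]) = inl (θ x) := by
  simp [← map_inv, ← inl_aut, zpowersHom_apply]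

theorem inl_mul_inr_conj (c x : N) :
    (inl c * inr (ofAdd 1) * inl x * (inl c * inr (ofAdd 1))⁻¹ : N ⋊ℤ[θ]) =
      inl (c * θ x * c⁻¹) := by
  rw [map_mul, map_mul, map_inv, ← inr_mul_inl_mul_inr_inv]
  group

def liftInt (f : N →* H) (u : H) (h : ∀ x, f (θ x) = u * f x * u⁻¹) : (N ⋊ℤ[θ]) →* H :=
  lift f (zpowersHom H u) fun g => by
    ext x
    simpa [zpowersHom_apply, ← map_zpow] using f.map_mulAut_zpow_apply h g.toAdd x

@[simp]
theorem liftInt_inl (f : N →* H) (u : H) (h : ∀ x, f (θ x) = u * f x * u⁻¹) (x : N) :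
    liftInt f u h (inl x) = f x :=
  lift_inl ..

@[simp]
theorem liftInt_inr (f : N →* H) (u : H) (h : ∀ x, f (θ x) = u * f x * u⁻¹) :
    liftInt f u h (inr (ofAdd 1)) = u := by
  simp [liftInt, zpowersHom_apply]

theorem hom_ext_int {f g : (N ⋊ℤ[θ]) →* H} (hl : f.comp inl = g.comp inl)
    (hr : f (inr (ofAdd 1)) = g (inr (ofAdd 1))) : f = g :=
  hom_ext hl (MonoidHom.ext_mint hr)

def mulEquivOfConjMul (c : N) (θ : MulAut N) : (N ⋊ℤ[MulAut.conj c * θ]) ≃* (N ⋊ℤ[θ]) :=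
  MonoidHom.toMulEquiv
    (liftInt inl (inl c * inr (ofAdd 1)) fun x => by
      rw [inl_mul_inr_conj]
      simp)
    (liftInt inl (inl c⁻¹ * inr (ofAdd 1)) fun x => by
      rw [inl_mul_inr_conj]
      simp [MulAut.conj_apply, mul_assoc])
    (hom_ext_int (MonoidHom.ext fun x => by simp) (by simp))
    (hom_ext_int (MonoidHom.ext fun x => by simp) (by simp))

def mulEquivOfConj (σ θ : MulAut N) : (N ⋊ℤ[θ]) ≃* (N ⋊ℤ[σ * θ * σ⁻¹]) :=
  congr σ (MulEquiv.refl _) fun g => by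
    ext x
    simp [zpowersHom_apply]

def mulEquivProdOfOne : (N ⋊ℤ[1]) ≃* N × Multiplicative ℤ :=
  (congr (MulEquiv.refl N) (MulEquiv.refl _) fun g => by ext; simp [zpowersHom_apply]).trans
    mulEquivProd

theorem nonempty_mulEquiv_of_eq_conj {θ τ σ : MulAut N} {c : N}
    (h : θ = σ * (MulAut.conj c * τ) * σ⁻¹) : Nonempty ((N ⋊ℤ[θ]) ≃* (N ⋊ℤ[τ])) := by
  subst h
  exact ⟨(mulEquivOfConj σ _).symm.trans (mulEquivOfConjMul c τ)⟩

def monoidHomEquivFixed (A : Type*) [CommGroup A] :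
    ((N ⋊ℤ[θ]) →* A) ≃ {f : N →* A // ∀ x, f (θ x) = f x} × A where
  toFun φ := (⟨φ.comp inl, fun x => by
      simpa using congrArg φ (inr_mul_inl_mul_inr_inv (θ := θ) x).symm⟩, φ (inr (ofAdd 1)))
  invFun p := liftInt p.1.1 p.2 fun x => by rw [p.1.2, mul_inv_cancel_comm]
  left_inv φ := hom_ext_int (by ext; simp) (by simp)
  right_inv p := by ext <;> simp

theorem card_monoidHom (A : Type*) [CommGroup A] :
    Nat.card ((N ⋊ℤ[θ]) →* A) = Nat.card {f : N →* A // ∀ x, f (θ x) = f x} * Nat.card A := by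
  rw [Nat.card_congr (monoidHomEquivFixed A), Nat.card_prod]

end SemidirectProduct

end SemidirectProductInt

namespace QuaternionGroup

open SemidirectProduct

-- Here `k = i * j = xa 3` and `j⁻¹ = xa 2`.
def cycleIJK : MulAut Q₈ where
  toFun := ofImages (xa 0) (xa 3)
  invFun := ofImages (xa 3) (a 1)
  left_inv := by decide
  right_inv := by decide
  map_mul' := by decide

def swapIK : MulAut Q₈ where
  toFun := ofImages (xa 3) (xa 2)
  invFun := ofImages (xa 3) (xa 2)
  left_inv := by decide
  right_inv := by decide
  map_mul' := by decide

-- The 3-cycles of `Out Q₈ ≅ S₃` are conjugate under `swapIK`, its transpositions under powers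
-- of `cycleIJK`.
theorem exists_eq_conj_of_injective : ∀ p q : Q₈, Function.Injective (ofImages (n := 2) p q) →
    ∃ τ ∈ [1, cycleIJK, swapIK], ∃ σ ∈ [1, cycleIJK, cycleIJK⁻¹, swapIK], ∃ c : Q₈,
      (σ * (MulAut.conj c * τ) * σ⁻¹) (a 1) = p ∧
        (σ * (MulAut.conj c * τ) * σ⁻¹) (xa 0) = q := by
  decide

theorem exists_eq_conj (θ : MulAut Q₈) :
    ∃ τ ∈ [1, cycleIJK, swapIK], ∃ (σ : MulAut Q₈) (c : Q₈),
      θ = σ * (MulAut.conj c * τ) * σ⁻¹ := by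
  have hinj : Function.Injective (ofImages (n := 2) (θ (a 1)) (θ (xa 0))) :=
    eq_ofImages θ.toMonoidHom ▸ θ.injective
  obtain ⟨τ, hτ, σ, -, c, h₁, h₂⟩ := exists_eq_conj_of_injective _ _ hinj
  exact ⟨τ, hτ, σ, c, mulAut_ext h₁.symm h₂.symm⟩

theorem card_monoidHom_one : Nat.card ((Q₈ ⋊ℤ[1]) →* C₂) = 8 := by
  simp only [card_monoidHom, card_monoidHom_fixed, Nat.card_eq_fintype_card]
  decide

theorem card_monoidHom_cycleIJK : Nat.card ((Q₈ ⋊ℤ[cycleIJK]) →* C₂) = 2 := by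
  simp only [card_monoidHom, card_monoidHom_fixed, Nat.card_eq_fintype_card]
  decide

theorem card_monoidHom_swapIK : Nat.card ((Q₈ ⋊ℤ[swapIK]) →* C₂) = 4 := by
  simp only [card_monoidHom, card_monoidHom_fixed, Nat.card_eq_fintype_card]
  decide

end QuaternionGroup

/-- Up to isomorphism there are exactly three semidirect products `Q₈ ⋊ ℤ`:
the direct product `Q₈ × ℤ`, the product `Q₈ ⋊_α ℤ` where `α(1)` cyclically permutes
`i, j, k = i*j`, and the product `Q₈ ⋊_β ℤ` where `β(1)` sends `i ↦ k` and `j ↦ j⁻¹`.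
In particular every `Q₈ ⋊_θ ℤ` is isomorphic to one of these three, and the three are
pairwise non-isomorphic. -/
theorem stmt_11 :
    ∃ α β : MulAut (QuaternionGroup 2),
      (∃ i j : QuaternionGroup 2, orderOf i = 4 ∧ orderOf j = 4 ∧
        j * i * j⁻¹ = i⁻¹ ∧ j ^ 2 = i ^ 2 ∧
        α i = j ∧ α j = i * j ∧ β i = i * j ∧ β j = j⁻¹) ∧
      (∀ θ : MulAut (QuaternionGroup 2),
        Nonempty ((QuaternionGroup 2 ⋊[zpowersHom (MulAut (QuaternionGroup 2)) θ]
            Multiplicative ℤ) ≃* QuaternionGroup 2 × Multiplicative ℤ) ∨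
        Nonempty ((QuaternionGroup 2 ⋊[zpowersHom (MulAut (QuaternionGroup 2)) θ]
            Multiplicative ℤ) ≃*
          (QuaternionGroup 2 ⋊[zpowersHom (MulAut (QuaternionGroup 2)) α]
            Multiplicative ℤ)) ∨
        Nonempty ((QuaternionGroup 2 ⋊[zpowersHom (MulAut (QuaternionGroup 2)) θ]
            Multiplicative ℤ) ≃*
          (QuaternionGroup 2 ⋊[zpowersHom (MulAut (QuaternionGroup 2)) β]
            Multiplicative ℤ))) ∧
      ¬ Nonempty ((QuaternionGroup 2 × Multiplicative ℤ) ≃*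
          (QuaternionGroup 2 ⋊[zpowersHom (MulAut (QuaternionGroup 2)) α]
            Multiplicative ℤ)) ∧
      ¬ Nonempty ((QuaternionGroup 2 × Multiplicative ℤ) ≃*
          (QuaternionGroup 2 ⋊[zpowersHom (MulAut (QuaternionGroup 2)) β]
            Multiplicative ℤ)) ∧
      ¬ Nonempty ((QuaternionGroup 2 ⋊[zpowersHom (MulAut (QuaternionGroup 2)) α]
            Multiplicative ℤ) ≃*
          (QuaternionGroup 2 ⋊[zpowersHom (MulAut (QuaternionGroup 2)) β]
            Multiplicative ℤ)) := by
  open QuaternionGroup SemidirectProduct in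
  refine ⟨cycleIJK, swapIK, ⟨a 1, xa 0, by simp, orderOf_xa 0,
    by decide, by decide, by decide, by decide, by decide, by decide⟩, fun θ => ?_, ?_, ?_, ?_⟩
  · obtain ⟨τ, hτ, σ, c, hθ⟩ := exists_eq_conj θ
    obtain ⟨e⟩ := nonempty_mulEquiv_of_eq_conj hθ
    simp only [List.mem_cons, List.not_mem_nil, or_false] at hτ
    rcases hτ with rfl | rfl | rfl
    exacts [Or.inl ⟨e.trans mulEquivProdOfOne⟩, Or.inr (Or.inl ⟨e⟩), Or.inr (Or.inr ⟨e⟩)]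
  · rintro ⟨e⟩
    have := Nat.card_congr ((mulEquivProdOfOne.trans e).monoidHomCongrLeftEquiv (N := C₂))
    rw [card_monoidHom_one, card_monoidHom_cycleIJK] at this
    omega
  · rintro ⟨e⟩
    have := Nat.card_congr ((mulEquivProdOfOne.trans e).monoidHomCongrLeftEquiv (N := C₂))
    rw [card_monoidHom_one, card_monoidHom_swapIK] at this
    omega
  · rintro ⟨e⟩
    have := Nat.card_congr (e.monoidHomCongrLeftEquiv (N := C₂))
    rw [card_monoidHom_cycleIJK, card_monoidHom_swapIK] at this
    omega
end
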